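/- arXiv:2102.01142 — 4 statements merged into one kernel-verified Lean document; each statement's English description precedes it below -/
import Mathlib

section
/- Fix p ≥ 1, a horizon ℓ ≥ 1, N ≥ 1, and matrices A_k ∈ ℝ^{d×d}, G_k ∈ ℝ^{d×q}, H_k ∈ ℝ^{r×d}, K_k ∈ ℝ^{d×r} for k = 0,…,ℓ−1. Let z¹,…,z^N ∈ ℝ^d satisfy ‖z^i‖_∞ ≤ ρ_{ξ₀}, let ω_k^i ∈ ℝ^q (k = 0,…,ℓ−1) satisfy ‖ω_k^i‖_∞ ≤ ρ_w, and let v_k^i ∈ ℝ^r be arbitrary vectors. For each i define the trajectory ξ_0^i = z^i, ξ_{k+1}^i = A_k ξ_k^i + G_k ω_k^i, and the observer trajectory ξ̂_0^i = 0, ξ̂_{k+1}^i = A_k ξ̂_k^i + K_k(H_k ξ̂_k^i − (H_k ξ_k^i + v_k^i)). Then W_p((1/N)Σ_{i=1}^N δ_{ξ̂_ℓ^i}, (1/N)Σ_{i=1}^N δ_{ξ_ℓ^i}) ≤ 2^{(p−1)/p}·𝔐_w + 2^{(p−1)/p}·((1/N)Σ_{i=1}^N (𝔈^i)^p)^{1/p},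 where 𝔐_w := √d·‖Ψ_ℓ‖·ρ_{ξ₀} + √q·Σ_{k=1}^ℓ ‖Ψ_{ℓ,ℓ−k+1}G_{ℓ−k}‖·ρ_w and 𝔈^i := Σ_{k=1}^ℓ ‖Ψ_{ℓ,ℓ−k+1}K_{ℓ−k}‖·‖v_{ℓ−k}^i‖₁. -/
open MeasureTheory ProbabilityTheory
open scoped ENNReal NNReal BigOperators RealInnerProductSpace

noncomputable section

/-- Euclidean space `ℝ^d`. -/
abbrev Euc (d : ℕ) : Type := EuclideanSpace ℝ (Fin d)

/-- The support of a Borel measure: points all of whose neighborhoods have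
positive measure. -/
def msupport {α : Type*} [TopologicalSpace α] [MeasurableSpace α] (μ : Measure α) : Set α :=
  {x | ∀ U : Set α, IsOpen U → x ∈ U → 0 < μ U}

/-- The `p`-Wasserstein distance between two measures on `ℝ^d` (valued in `ℝ≥0∞`),
defined as the infimum over couplings of the `p`-th root of the `p`-cost. -/
def Wp {d : ℕ} (p : ℝ) (μ ν : Measure (Euc d)) : ℝ≥0∞ :=
  sInf { r : ℝ≥0∞ | ∃ π : Measure (Euc d × Euc d),
      IsProbabilityMeasure π ∧ π.map Prod.fst = μ ∧ π.map Prod.snd = ν ∧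
      r = (∫⁻ z, (ENNReal.ofReal ‖z.1 - z.2‖) ^ p ∂π) ^ (1 / p) }

/-- The empirical measure of `N` points of `ℝ^d`. -/
def empMeas {d N : ℕ} (x : Fin N → Euc d) : Measure (Euc d) :=
  (N : ℝ≥0∞)⁻¹ • ∑ i, Measure.dirac (x i)

/-- The `ψ_p`-Orlicz norm of a real random variable (valued in `ℝ≥0∞`; `⊤` if no
finite `t` works). -/
def psiNorm {Ω : Type*} [MeasurableSpace Ω] (p : ℝ) (P : Measure Ω) (X : Ω → ℝ) : ℝ≥0∞ :=
  sInf {s : ℝ≥0∞ | ∃ t : ℝ, 0 < t ∧ s = ENNReal.ofReal t ∧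
    ∫⁻ ω, ENNReal.ofReal (Real.exp ((|X ω| / t) ^ p)) ∂P ≤ 2}

/-- The `L^p` norm `(E|X|^p)^{1/p}` of a real random variable (valued in `ℝ≥0∞`). -/
def LpNorm {Ω : Type*} [MeasurableSpace Ω] (p : ℝ) (P : Measure Ω) (X : Ω → ℝ) : ℝ≥0∞ :=
  (∫⁻ ω, (ENNReal.ofReal |X ω|) ^ p ∂P) ^ (1 / p)

/-- `prodCLM F b s = F (b+s-1) ∘ ⋯ ∘ F (b+1) ∘ F b` (so `prodCLM F b s = Ψ_{b+s,b}`),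
with `prodCLM F b 0 = id`. -/
def prodCLM {d : ℕ} (F : ℕ → (Euc d →L[ℝ] Euc d)) : ℕ → ℕ → (Euc d →L[ℝ] Euc d)
  | _, 0 => ContinuousLinearMap.id ℝ (Euc d)
  | b, s + 1 => (F (b + s)).comp (prodCLM F b s)

/-- `α_p(s) = s²` on `[0,1]` and `s^p` for `s > 1`. -/
def alphaP (p s : ℝ) : ℝ := if s ≤ 1 then s ^ 2 else s ^ p

/-- The inverse of `α_p` on `[0,∞)`: `√y` on `[0,1]` and `y^{1/p}` for `y > 1`. -/
def alphaPInv (p y : ℝ) : ℝ := if y ≤ 1 then Real.sqrt y else y ^ (1 / p)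

/-- Convolution of two measures on `ℝ^d`: the image of `μ ⊗ ν` under addition. -/
def mconv {d : ℕ} (μ ν : Measure (Euc d)) : Measure (Euc d) :=
  (μ.prod ν).map (fun z => z.1 + z.2)

/-- `h(x) = x² / (ln(2 + 1/x))²`. -/
def hfun (x : ℝ) : ℝ := x ^ 2 / (Real.log (2 + 1 / x)) ^ 2

/-- The inverse of `h` on `(0,∞)`. -/
def hInv (y : ℝ) : ℝ := sInf {x : ℝ | 0 < x ∧ y ≤ hfun x}

/-- The `ℓ^∞` diameter of a subset of `ℝ^d`. -/
def diamInf {d : ℕ} (S : Set (Euc d)) : ℝ :=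
  sSup {r : ℝ | ∃ x ∈ S, ∃ y ∈ S, r = ‖(fun j => x j - y j : Fin d → ℝ)‖}

/-- The nominal ambiguity radius `ε_N(β, ρ)` with constants `C`, `c`. -/
def epsN (p : ℝ) (d : ℕ) (C c : ℝ) (N : ℕ) (β ρ : ℝ) : ℝ :=
  if (d : ℝ) / 2 < p then
    (Real.log (C / β) / c) ^ (1 / (2 * p)) * ρ / (N : ℝ) ^ (1 / (2 * p))
  else if p = (d : ℝ) / 2 then
    (hInv (Real.log (C / β) / (c * N))) ^ (1 / p) * ρ
  else
    (Real.log (C / β) / c) ^ (1 / (d : ℝ)) * ρ / (N : ℝ) ^ (1 / (d : ℝ))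

/-- The constant `C⋆` of the mean empirical Wasserstein decay bound. -/
def Cstar (p : ℝ) (d : ℕ) : ℝ :=
  Real.sqrt d * 2 ^ (((d : ℝ) - 2) / (2 * p)) *
    (1 / (1 - 2 ^ (p - (d : ℝ) / 2)) + 1 / (1 - 2 ^ (-p))) ^ (1 / p)

end

lemma euc_norm_le_sqrt_mul {n : ℕ} (x : EuclideanSpace ℝ (Fin n)) {ρ : ℝ}
    (hx : ∀ j, |x j| ≤ ρ) : ‖x‖ ≤ Real.sqrt n * ρ := by
  rcases Nat.eq_zero_or_pos n with h | h
  · subst h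
    simp [EuclideanSpace.norm_eq]
  · have hρ : 0 ≤ ρ := (abs_nonneg _).trans (hx ⟨0, h⟩)
    rw [EuclideanSpace.norm_eq]
    have hsum : ∑ j, ‖x j‖ ^ 2 ≤ (n : ℝ) * ρ ^ 2 := by
      calc ∑ j, ‖x j‖ ^ 2 ≤ ∑ _j : Fin n, ρ ^ 2 := by
            refine Finset.sum_le_sum fun j _ => ?_
            rw [Real.norm_eq_abs]
            exact pow_le_pow_left₀ (abs_nonneg _) (hx j) 2
        _ = (n : ℝ) * ρ ^ 2 := by simp [Finset.sum_const, mul_comm]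
    calc Real.sqrt (∑ j, ‖x j‖ ^ 2) ≤ Real.sqrt ((n : ℝ) * ρ ^ 2) := Real.sqrt_le_sqrt hsum
      _ = Real.sqrt n * ρ := by
          rw [Real.sqrt_mul (Nat.cast_nonneg n), Real.sqrt_sq hρ]

lemma euc_norm_le_sum_abs {n : ℕ} (x : EuclideanSpace ℝ (Fin n)) :
    ‖x‖ ≤ ∑ l, |x l| := by
  rw [EuclideanSpace.norm_eq]
  have h1 : ∑ j, ‖x j‖ ^ 2 ≤ (∑ j, ‖x j‖) ^ 2 :=
    Finset.sum_sq_le_sq_sum_of_nonneg fun _ _ => norm_nonneg _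
  calc Real.sqrt (∑ j, ‖x j‖ ^ 2) ≤ Real.sqrt ((∑ j, ‖x j‖) ^ 2) := Real.sqrt_le_sqrt h1
    _ = ∑ j, ‖x j‖ := Real.sqrt_sq (Finset.sum_nonneg fun _ _ => norm_nonneg _)
    _ = ∑ l, |x l| := by simp [Real.norm_eq_abs]

/-- Distance between the true- and estimator-based empirical
distributions, deterministic initial conditions and internal noise. -/
theorem empirical_vs_estimator_empirical {d q r : ℕ} (p : ℝ) (hp : 1 ≤ p)
    (ℓ N : ℕ) (hℓ : 1 ≤ ℓ) (hN : 1 ≤ N)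
    (A : ℕ → Euc d →L[ℝ] Euc d) (G : ℕ → Euc q →L[ℝ] Euc d)
    (H : ℕ → Euc d →L[ℝ] Euc r) (K : ℕ → Euc r →L[ℝ] Euc d)
    (ρξ ρw : ℝ)
    (z : Fin N → Euc d) (hz : ∀ i j, |z i j| ≤ ρξ)
    (w : ℕ → Fin N → Euc q) (hw : ∀ k, k < ℓ → ∀ i j, |w k i j| ≤ ρw)
    (v : ℕ → Fin N → Euc r)
    (ξ ξh : Fin N → ℕ → Euc d)
    (hξ0 : ∀ i, ξ i 0 = z i)
    (hξ : ∀ i k, k < ℓ → ξ i (k + 1) = A k (ξ i k) + G k (w k i))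
    (hξh0 : ∀ i, ξh i 0 = 0)
    (hξh : ∀ i k, k < ℓ → ξh i (k + 1) =
      A k (ξh i k) + K k (H k (ξh i k) - (H k (ξ i k) + v k i))) :
    -- `F_k = A_k + K_k H_k`, so `Ψ_{a,b} = prodCLM F b (a-b)`
    let F : ℕ → Euc d →L[ℝ] Euc d := fun k => A k + (K k).comp (H k)
    let Mw : ℝ := Real.sqrt d * ‖prodCLM F 0 ℓ‖ * ρξ +
      Real.sqrt q * (∑ j ∈ Finset.range ℓ, ‖(prodCLM F (j + 1) (ℓ - 1 - j)).comp (G j)‖) * ρw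
    let E : Fin N → ℝ := fun i =>
      ∑ j ∈ Finset.range ℓ, ‖(prodCLM F (j + 1) (ℓ - 1 - j)).comp (K j)‖ * (∑ l, |v j i l|)
    Wp p (empMeas (fun i => ξh i ℓ)) (empMeas (fun i => ξ i ℓ)) ≤
      ENNReal.ofReal (2 ^ ((p - 1) / p) * Mw +
        2 ^ ((p - 1) / p) * ((1 / N : ℝ) * ∑ i, E i ^ p) ^ (1 / p)) := by
  intro F Mw E
  have hp0 : (0 : ℝ) < p := lt_of_lt_of_le one_pos hp
  have hNpos : 0 < N := hN
  -- closed form for the error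
  have key : ∀ (i : Fin N) (k : ℕ), k ≤ ℓ → ξh i k - ξ i k =
      -(prodCLM F 0 k (z i)) - ∑ j ∈ Finset.range k,
        (prodCLM F (j + 1) (k - 1 - j)) (K j (v j i) + G j (w j i)) := by
    intro i k
    induction k with
    | zero => intro _; simp [hξ0, hξh0, prodCLM]
    | succ k ih =>
      intro hk
      have hkℓ : k < ℓ := hk
      have ihk := ih hkℓ.le
      have hrec : ξh i (k + 1) - ξ i (k + 1)
          = F k (ξh i k - ξ i k) - (K k (v k i) + G k (w k i)) := by
        rw [hξ i k hkℓ, hξh i k hkℓ]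
        simp only [F, ContinuousLinearMap.add_apply, ContinuousLinearMap.comp_apply,
          map_sub, map_add]
        abel
      have h1 : ∀ u : Euc d, F k (prodCLM F 0 k u) = prodCLM F 0 (k + 1) u := by
        intro u
        have : prodCLM F 0 (k + 1) = (F (0 + k)).comp (prodCLM F 0 k) := rfl
        rw [this, Nat.zero_add, ContinuousLinearMap.comp_apply]
      have h2 : ∀ j ∈ Finset.range k, ∀ u : Euc r ⊕ Euc q,
          True := fun _ _ _ => trivial
      have h3 : ∀ j, j < k → ∀ u : Euc d,
          F k (prodCLM F (j + 1) (k - 1 - j) u) = prodCLM F (j + 1) (k + 1 - 1 - j) u := by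
        intro j hj u
        have e1 : (j + 1) + (k - 1 - j) = k := by omega
        have e2 : (k - 1 - j) + 1 = k + 1 - 1 - j := by omega
        calc F k (prodCLM F (j + 1) (k - 1 - j) u)
            = (F ((j + 1) + (k - 1 - j))) (prodCLM F (j + 1) (k - 1 - j) u) := by rw [e1]
          _ = prodCLM F (j + 1) ((k - 1 - j) + 1) u := rfl
          _ = prodCLM F (j + 1) (k + 1 - 1 - j) u := by rw [e2]
      rw [hrec, ihk]
      rw [Finset.sum_range_succ]
      have hlast : k + 1 - 1 - k = 0 := by omega
      rw [hlast]
      simp only [map_sub, map_neg, map_sum, h1]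
      rw [Finset.sum_congr rfl fun j hj =>
        h3 j (Finset.mem_range.mp hj) (K j (v j i) + G j (w j i))]
      show _ = _ - (_ + prodCLM F (k + 1) 0 (K k (v k i) + G k (w k i)))
      simp only [prodCLM, ContinuousLinearMap.id_apply]
      abel
  -- pointwise norm bound
  have hE : ∀ i, 0 ≤ E i := fun i =>
    Finset.sum_nonneg fun j _ => mul_nonneg (norm_nonneg _)
      (Finset.sum_nonneg fun l _ => abs_nonneg _)
  have hMw : 0 ≤ Mw := by
    have h1 : 0 ≤ Real.sqrt d * ‖prodCLM F 0 ℓ‖ * ρξ := by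
      rcases Nat.eq_zero_or_pos d with hd | hd
      · have hd0 : (d : ℝ) = 0 := by rw [hd]; norm_num
        rw [hd0, Real.sqrt_zero, zero_mul, zero_mul]
      · have hρ : 0 ≤ ρξ := (abs_nonneg _).trans (hz ⟨0, hNpos⟩ ⟨0, hd⟩)
        exact mul_nonneg (mul_nonneg (Real.sqrt_nonneg _) (norm_nonneg _)) hρ
    have h2 : 0 ≤ Real.sqrt q *
        (∑ j ∈ Finset.range ℓ, ‖(prodCLM F (j + 1) (ℓ - 1 - j)).comp (G j)‖) * ρw := by
      rcases Nat.eq_zero_or_pos q with hq | hq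
      · have hq0 : (q : ℝ) = 0 := by rw [hq]; norm_num
        rw [hq0, Real.sqrt_zero, zero_mul, zero_mul]
      · have hρ : 0 ≤ ρw := (abs_nonneg _).trans (hw 0 hℓ ⟨0, hNpos⟩ ⟨0, hq⟩)
        exact mul_nonneg (mul_nonneg (Real.sqrt_nonneg _)
          (Finset.sum_nonneg fun j _ => norm_nonneg _)) hρ
    exact add_nonneg h1 h2
  have hMwE : ∀ i : Fin N, ‖ξh i ℓ - ξ i ℓ‖ ≤ Mw + E i := by
    intro i
    rw [key i ℓ le_rfl]
    have hneg : -(prodCLM F 0 ℓ (z i)) - ∑ j ∈ Finset.range ℓ,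
        (prodCLM F (j + 1) (ℓ - 1 - j)) (K j (v j i) + G j (w j i))
        = -((prodCLM F 0 ℓ (z i)) + ∑ j ∈ Finset.range ℓ,
        (prodCLM F (j + 1) (ℓ - 1 - j)) (K j (v j i) + G j (w j i))) := by abel
    rw [hneg, norm_neg]
    have hzn : ‖prodCLM F 0 ℓ (z i)‖ ≤ ‖prodCLM F 0 ℓ‖ * (Real.sqrt d * ρξ) :=
      le_trans ((prodCLM F 0 ℓ).le_opNorm (z i))
        (mul_le_mul_of_nonneg_left (euc_norm_le_sqrt_mul (z i) (hz i)) (norm_nonneg _))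
    have hterm : ∀ j ∈ Finset.range ℓ,
        ‖(prodCLM F (j + 1) (ℓ - 1 - j)) (K j (v j i) + G j (w j i))‖ ≤
        ‖(prodCLM F (j + 1) (ℓ - 1 - j)).comp (K j)‖ * (∑ l, |v j i l|) +
        ‖(prodCLM F (j + 1) (ℓ - 1 - j)).comp (G j)‖ * (Real.sqrt q * ρw) := by
      intro j hj
      have hjℓ : j < ℓ := Finset.mem_range.mp hj
      calc ‖(prodCLM F (j + 1) (ℓ - 1 - j)) (K j (v j i) + G j (w j i))‖
          ≤ ‖(prodCLM F (j + 1) (ℓ - 1 - j)) (K j (v j i))‖ +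
            ‖(prodCLM F (j + 1) (ℓ - 1 - j)) (G j (w j i))‖ := by
            rw [map_add]; exact norm_add_le _ _
        _ ≤ ‖(prodCLM F (j + 1) (ℓ - 1 - j)).comp (K j)‖ * (∑ l, |v j i l|) +
            ‖(prodCLM F (j + 1) (ℓ - 1 - j)).comp (G j)‖ * (Real.sqrt q * ρw) := by
            gcongr
            · exact le_trans (((prodCLM F (j + 1) (ℓ - 1 - j)).comp (K j)).le_opNorm _)
                (mul_le_mul_of_nonneg_left (euc_norm_le_sum_abs _) (norm_nonneg _))
            · exact le_trans (((prodCLM F (j + 1) (ℓ - 1 - j)).comp (G j)).le_opNorm _)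
                (mul_le_mul_of_nonneg_left
                  (euc_norm_le_sqrt_mul _ (fun l => hw j hjℓ i l)) (norm_nonneg _))
    calc ‖(prodCLM F 0 ℓ (z i)) + ∑ j ∈ Finset.range ℓ,
          (prodCLM F (j + 1) (ℓ - 1 - j)) (K j (v j i) + G j (w j i))‖
        ≤ ‖prodCLM F 0 ℓ (z i)‖ + ‖∑ j ∈ Finset.range ℓ,
          (prodCLM F (j + 1) (ℓ - 1 - j)) (K j (v j i) + G j (w j i))‖ := norm_add_le _ _
      _ ≤ ‖prodCLM F 0 ℓ‖ * (Real.sqrt d * ρξ) + ∑ j ∈ Finset.range ℓ,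
          (‖(prodCLM F (j + 1) (ℓ - 1 - j)).comp (K j)‖ * (∑ l, |v j i l|) +
          ‖(prodCLM F (j + 1) (ℓ - 1 - j)).comp (G j)‖ * (Real.sqrt q * ρw)) := by
          gcongr
          exact le_trans (norm_sum_le _ _) (Finset.sum_le_sum hterm)
      _ = Mw + E i := by
          show _ = (Real.sqrt d * ‖prodCLM F 0 ℓ‖ * ρξ +
            Real.sqrt q * (∑ j ∈ Finset.range ℓ,
              ‖(prodCLM F (j + 1) (ℓ - 1 - j)).comp (G j)‖) * ρw) + _
          rw [Finset.sum_add_distrib, ← Finset.sum_mul]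
          ring
  -- the coupling
  set x : Fin N → Euc d := fun i => ξh i ℓ with hxdef
  set y : Fin N → Euc d := fun i => ξ i ℓ with hydef
  have hNne : (N : ℝ≥0∞) ≠ 0 := Nat.cast_ne_zero.mpr (by omega)
  have hNtop : (N : ℝ≥0∞) ≠ ⊤ := ENNReal.natCast_ne_top N
  set π : Measure (Euc d × Euc d) :=
    (N : ℝ≥0∞)⁻¹ • ∑ i : Fin N, Measure.dirac (x i, y i) with hπdef
  have hπ_prob : IsProbabilityMeasure π := by
    constructor
    simp only [hπdef, Measure.smul_apply, Measure.finset_sum_apply, measure_univ,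
      smul_eq_mul, Finset.sum_const, Finset.card_univ, Fintype.card_fin, nsmul_eq_mul,
      mul_one]
    exact ENNReal.inv_mul_cancel hNne hNtop
  have hfst : π.map Prod.fst = empMeas x := by
    ext s hs
    rw [Measure.map_apply measurable_fst hs]
    simp only [hπdef, empMeas, Measure.smul_apply, Measure.finset_sum_apply, smul_eq_mul]
    congr 1
    refine Finset.sum_congr rfl fun i _ => ?_
    rw [Measure.dirac_apply, Measure.dirac_apply]
    by_cases hxi : x i ∈ s <;>
      simp [Set.indicator_of_mem, Set.indicator_of_notMem, hxi]
  have hsnd : π.map Prod.snd = empMeas y := by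
    ext s hs
    rw [Measure.map_apply measurable_snd hs]
    simp only [hπdef, empMeas, Measure.smul_apply, Measure.finset_sum_apply, smul_eq_mul]
    congr 1
    refine Finset.sum_congr rfl fun i _ => ?_
    rw [Measure.dirac_apply, Measure.dirac_apply]
    by_cases hyi : y i ∈ s <;>
      simp [Set.indicator_of_mem, Set.indicator_of_notMem, hyi]
  have hint : (∫⁻ zz, (ENNReal.ofReal ‖zz.1 - zz.2‖) ^ p ∂π)
      = (N : ℝ≥0∞)⁻¹ * ∑ i, (ENNReal.ofReal ‖x i - y i‖) ^ p := by
    rw [hπdef, lintegral_smul_measure, lintegral_finset_sum_measure]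
    simp [lintegral_dirac]
  have hWle : Wp p (empMeas x) (empMeas y) ≤
      ((N : ℝ≥0∞)⁻¹ * ∑ i, (ENNReal.ofReal ‖x i - y i‖) ^ p) ^ (1 / p) :=
    sInf_le ⟨π, hπ_prob, hfst, hsnd, by rw [hint]⟩
  -- the averaging measure on `Fin N`
  set Q : Measure (Fin N) := (N : ℝ≥0∞)⁻¹ • Measure.sum (fun i : Fin N => Measure.dirac i)
    with hQdef
  have hQint : ∀ g : Fin N → ℝ≥0∞, ∫⁻ i, g i ∂Q = (N : ℝ≥0∞)⁻¹ * ∑ i, g i := by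
    intro g
    rw [hQdef, lintegral_smul_measure, lintegral_sum_measure]
    simp [lintegral_dirac, tsum_fintype]
  have hQuniv : Q Set.univ = 1 := by
    have := hQint 1
    simp only [Pi.one_apply, lintegral_one, Finset.sum_const, Finset.card_univ,
      Fintype.card_fin, nsmul_eq_mul, mul_one] at this
    rw [this, ENNReal.inv_mul_cancel hNne hNtop]
  set a : ℝ≥0∞ := ENNReal.ofReal Mw with hadef
  set b : Fin N → ℝ≥0∞ := fun i => ENNReal.ofReal (E i) with hbdef
  have step1 : ((N : ℝ≥0∞)⁻¹ * ∑ i, (ENNReal.ofReal ‖x i - y i‖) ^ p) ^ (1 / p)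
      ≤ (∫⁻ i, (a + b i) ^ p ∂Q) ^ (1 / p) := by
    refine ENNReal.rpow_le_rpow ?_ (by positivity)
    rw [hQint]
    refine mul_le_mul_right (Finset.sum_le_sum fun i _ => ?_) _
    refine ENNReal.rpow_le_rpow ?_ hp0.le
    calc ENNReal.ofReal ‖x i - y i‖ ≤ ENNReal.ofReal (Mw + E i) :=
          ENNReal.ofReal_le_ofReal (hMwE i)
      _ = a + b i := ENNReal.ofReal_add hMw (hE i)
  have step2 : (∫⁻ i, (a + b i) ^ p ∂Q) ^ (1 / p)
      ≤ (∫⁻ _i, a ^ p ∂Q) ^ (1 / p) + (∫⁻ i, b i ^ p ∂Q) ^ (1 / p) :=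
    ENNReal.lintegral_Lp_add_le aemeasurable_const
      (Measurable.of_discrete (f := b)).aemeasurable hp
  have step3 : (∫⁻ _i, a ^ p ∂Q) ^ (1 / p) = a := by
    rw [lintegral_const, hQuniv, mul_one, ← ENNReal.rpow_mul,
      mul_one_div_cancel hp0.ne', ENNReal.rpow_one]
  have step4 : (∫⁻ i, b i ^ p ∂Q) ^ (1 / p)
      = ENNReal.ofReal (((1 / N : ℝ) * ∑ i, E i ^ p) ^ (1 / p)) := by
    rw [hQint]
    have heq : (N : ℝ≥0∞)⁻¹ * ∑ i, b i ^ p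
        = ENNReal.ofReal ((1 / N : ℝ) * ∑ i, E i ^ p) := by
      rw [ENNReal.ofReal_mul (by positivity)]
      congr 1
      · rw [one_div, ENNReal.ofReal_inv_of_pos (by exact_mod_cast hNpos),
          ENNReal.ofReal_natCast]
      · rw [ENNReal.ofReal_sum_of_nonneg (fun i _ => Real.rpow_nonneg (hE i) p)]
        exact Finset.sum_congr rfl fun i _ =>
          ENNReal.ofReal_rpow_of_nonneg (hE i) hp0.le
    rw [heq, ENNReal.ofReal_rpow_of_nonneg ?_ (by positivity)]
    positivity
  have hS : (0 : ℝ) ≤ ((1 / N : ℝ) * ∑ i, E i ^ p) ^ (1 / p) := by positivity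
  have hc : (1 : ℝ) ≤ 2 ^ ((p - 1) / p) :=
    Real.one_le_rpow one_le_two (div_nonneg (by linarith) hp0.le)
  have step5 : a + ENNReal.ofReal (((1 / N : ℝ) * ∑ i, E i ^ p) ^ (1 / p))
      ≤ ENNReal.ofReal (2 ^ ((p - 1) / p) * Mw +
        2 ^ ((p - 1) / p) * ((1 / N : ℝ) * ∑ i, E i ^ p) ^ (1 / p)) := by
    rw [hadef, ← ENNReal.ofReal_add hMw hS]
    refine ENNReal.ofReal_le_ofReal ?_
    nlinarith [mul_nonneg (sub_nonneg.mpr hc) hMw, mul_nonneg (sub_nonneg.mpr hc) hS]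
  calc Wp p (empMeas x) (empMeas y)
      ≤ ((N : ℝ≥0∞)⁻¹ * ∑ i, (ENNReal.ofReal ‖x i - y i‖) ^ p) ^ (1 / p) := hWle
    _ ≤ (∫⁻ i, (a + b i) ^ p ∂Q) ^ (1 / p) := step1
    _ ≤ (∫⁻ _i, a ^ p ∂Q) ^ (1 / p) + (∫⁻ i, b i ^ p ∂Q) ^ (1 / p) := step2
    _ = a + ENNReal.ofReal (((1 / N : ℝ) * ∑ i, E i ^ p) ^ (1 / p)) := by
        rw [step3, step4]
    _ ≤ _ := step5
end

section
/- Let F_k ∈ ℝ^{d×d} for k ∈ ℕ₀ and define Ψ_{k+s,k} := F_{k+s−1}···F_{k+1}F_k with Ψ_{k,k} = I. Suppose there exist m ∈ ℕ, constants a₁, a₂ > 0, a₃ ∈ (0,1), and symmetric positive-definite matrices Q_k such that a₁ ≤ λ_min(Q_k) ≤ λ_max(Q_k) ≤ a₂ and Ψ_{k+m,k}ᵀ Q_{k+m} Ψ_{k+m,k} ⪯ (1−a₃)·Q_k for all k ∈ ℕ₀. Then ‖Ψ_{k+νm,k}‖ ≤ (1−a₃)^{ν/2}·(a₂/a₁)^{1/2}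 for all k ∈ ℕ₀ and all ν ∈ ℕ. If, in addition, there exist constants Ψ*_s > 0 with ‖Ψ_{k+s,k}‖ ≤ Ψ*_s for all k ∈ ℕ₀ and all s ∈ [1:m], then there exists s₀ ∈ ℕ such that ‖Ψ_{k+s,k}‖ ≤ 1/2 for all k ∈ ℕ₀ and all s ≥ s₀. -/
open MeasureTheory ProbabilityTheory
open scoped ENNReal NNReal BigOperators RealInnerProductSpace

lemma prodCLM_add' {d : ℕ} (F : ℕ → (Euc d →L[ℝ] Euc d)) (k s : ℕ) :
    ∀ t, prodCLM F k (s + t) = (prodCLM F (k + s) t).comp (prodCLM F k s) := by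
  intro t
  induction t with
  | zero => simp [prodCLM]
  | succ t ih =>
      show prodCLM F k ((s + t) + 1) = _
      rw [prodCLM, ih]
      show _ = ((F (k + s + t)).comp (prodCLM F (k + s) t)).comp (prodCLM F k s)
      rw [ContinuousLinearMap.comp_assoc]
      ring_nf

/-- Contraction of the fundamental matrices of the observer
error dynamics under a Lyapunov-type decrease condition. Here `Ψ_{k+s,k} =
prodCLM F k s` and the eigenvalue bounds / matrix inequalities are stated via
the associated quadratic forms. -/
theorem fundamental_matrix_contraction {d : ℕ} (F : ℕ → Euc d →L[ℝ] Euc d)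
    (m : ℕ) (hm : 1 ≤ m) (a₁ a₂ a₃ : ℝ)
    (ha₁ : 0 < a₁) (ha₂ : 0 < a₂) (ha₃ : 0 < a₃) (ha₃' : a₃ < 1)
    (Q : ℕ → Euc d →L[ℝ] Euc d)
    (hQsym : ∀ k, IsSelfAdjoint (Q k))
    (hQlow : ∀ k (x : Euc d), a₁ * ‖x‖ ^ 2 ≤ ⟪Q k x, x⟫)
    (hQup : ∀ k (x : Euc d), ⟪Q k x, x⟫ ≤ a₂ * ‖x‖ ^ 2)
    (hdec : ∀ k (x : Euc d),
      ⟪Q (k + m) (prodCLM F k m x), prodCLM F k m x⟫ ≤ (1 - a₃) * ⟪Q k x, x⟫) :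
    (∀ k ν : ℕ, 1 ≤ ν →
      ‖prodCLM F k (ν * m)‖ ≤ (1 - a₃) ^ ((ν : ℝ) / 2) * (a₂ / a₁) ^ ((1 : ℝ) / 2)) ∧
    ((∃ Ψstar : ℕ → ℝ, (∀ s, 0 < Ψstar s) ∧
        (∀ k s, 1 ≤ s → s ≤ m → ‖prodCLM F k s‖ ≤ Ψstar s)) →
      ∃ s₀ : ℕ, 1 ≤ s₀ ∧ ∀ k s, s₀ ≤ s → ‖prodCLM F k s‖ ≤ 1 / 2) := by
  have h1a : (0:ℝ) ≤ 1 - a₃ := by linarith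
  -- quadratic decay
  have quad : ∀ ν k (x : Euc d),
      ⟪Q (k + ν * m) (prodCLM F k (ν * m) x), prodCLM F k (ν * m) x⟫
        ≤ (1 - a₃) ^ ν * ⟪Q k x, x⟫ := by
    intro ν
    induction ν with
    | zero => intro k x; simp [prodCLM]
    | succ ν ih =>
        intro k x
        have hsum : (ν + 1) * m = ν * m + m := by ring
        have hdecomp : prodCLM F k ((ν + 1) * m)
            = (prodCLM F (k + ν * m) m).comp (prodCLM F k (ν * m)) := by
          rw [hsum, prodCLM_add']
        rw [hdecomp]
        have h1 := hdec (k + ν * m) (prodCLM F k (ν * m) x)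
        have h2 := ih k x
        have hkey : k + (ν + 1) * m = k + ν * m + m := by ring
        rw [hkey]
        calc ⟪Q (k + ν * m + m) ((prodCLM F (k + ν * m) m).comp (prodCLM F k (ν * m)) x),
              (prodCLM F (k + ν * m) m).comp (prodCLM F k (ν * m)) x⟫
            ≤ (1 - a₃) * ⟪Q (k + ν * m) (prodCLM F k (ν * m) x), prodCLM F k (ν * m) x⟫ := h1
          _ ≤ (1 - a₃) * ((1 - a₃) ^ ν * ⟪Q k x, x⟫) := mul_le_mul_of_nonneg_left h2 h1a
          _ = (1 - a₃) ^ (ν + 1) * ⟪Q k x, x⟫ := by ring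
  -- norm bound
  have key : ∀ ν k, ‖prodCLM F k (ν * m)‖ ≤ Real.sqrt ((1 - a₃) ^ ν * (a₂ / a₁)) := by
    intro ν k
    apply ContinuousLinearMap.opNorm_le_bound _ (Real.sqrt_nonneg _)
    intro x
    have hp : (0:ℝ) ≤ (1 - a₃) ^ ν := pow_nonneg h1a ν
    have h1 := hQlow (k + ν * m) (prodCLM F k (ν * m) x)
    have h4 : a₁ * ‖prodCLM F k (ν * m) x‖ ^ 2 ≤ (1 - a₃) ^ ν * (a₂ * ‖x‖ ^ 2) :=
      le_trans (h1.trans (quad ν k x)) (mul_le_mul_of_nonneg_left (hQup k x) hp)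
    have hsq : ‖prodCLM F k (ν * m) x‖ ^ 2 ≤ (1 - a₃) ^ ν * (a₂ / a₁) * ‖x‖ ^ 2 := by
      rw [show (1 - a₃) ^ ν * (a₂ / a₁) * ‖x‖ ^ 2
          = ((1 - a₃) ^ ν * (a₂ * ‖x‖ ^ 2)) / a₁ by ring, le_div_iff₀ ha₁]
      linarith
    have := Real.sqrt_le_sqrt hsq
    rwa [Real.sqrt_sq (norm_nonneg _), Real.sqrt_mul (by positivity),
      Real.sqrt_sq (norm_nonneg _)] at this
  constructor
  · intro k ν _
    have := key ν k
    rwa [Real.sqrt_mul (pow_nonneg h1a ν), Real.sqrt_eq_rpow, Real.sqrt_eq_rpow,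
      ← Real.rpow_natCast (1 - a₃) ν, ← Real.rpow_mul h1a,
      show (ν : ℝ) * (1 / 2) = (ν : ℝ) / 2 by ring] at this
  · rintro ⟨Ψstar, hΨpos, hΨ⟩
    set c := Real.sqrt (1 - a₃) with hc
    set D := Real.sqrt (a₂ / a₁) with hD
    have hc0 : 0 ≤ c := Real.sqrt_nonneg _
    have hc1 : c < 1 := (Real.sqrt_lt' one_pos).mpr (by nlinarith)
    have hD0 : 0 < D := Real.sqrt_pos.mpr (by positivity)
    have keyc : ∀ ν k, ‖prodCLM F k (ν * m)‖ ≤ c ^ ν * D := by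
      intro ν k
      have h5 := key ν k
      have h6 : Real.sqrt ((1 - a₃) ^ ν) = c ^ ν := by
        rw [← Real.sqrt_sq (pow_nonneg hc0 ν)]
        congr 1
        rw [← pow_mul, mul_comm, pow_mul, Real.sq_sqrt h1a]
      rwa [Real.sqrt_mul (pow_nonneg h1a ν), h6] at h5
    set Ψmax := 1 + ∑ i ∈ Finset.range (m + 1), |Ψstar i| with hΨmax
    have hsumnn : (0:ℝ) ≤ ∑ i ∈ Finset.range (m + 1), |Ψstar i| :=
      Finset.sum_nonneg fun i _ => abs_nonneg _
    have hΨ1 : (1:ℝ) ≤ Ψmax := by rw [hΨmax]; linarith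
    have hΨbound : ∀ k r, r ≤ m → ‖prodCLM F k r‖ ≤ Ψmax := by
      intro k r hr
      rcases Nat.eq_zero_or_pos r with h0 | h0
      · subst h0
        calc ‖prodCLM F k 0‖ ≤ 1 := ContinuousLinearMap.norm_id_le
          _ ≤ Ψmax := hΨ1
      · calc ‖prodCLM F k r‖ ≤ Ψstar r := hΨ k r h0 hr
          _ ≤ |Ψstar r| := le_abs_self _
          _ ≤ ∑ i ∈ Finset.range (m + 1), |Ψstar i| :=
              Finset.single_le_sum (f := fun i => |Ψstar i|) (fun i _ => abs_nonneg _)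
                (Finset.mem_range.mpr (Nat.lt_succ_of_le hr))
          _ ≤ Ψmax := by rw [hΨmax]; linarith
    obtain ⟨q₀, hq₀⟩ := exists_pow_lt_of_lt_one (show (0:ℝ) < (1/2) / (D * Ψmax) by positivity) hc1
    refine ⟨(q₀ + 1) * m, by nlinarith [hm], ?_⟩
    intro k s hs
    have hq : q₀ ≤ s / m := by
      have : q₀ + 1 ≤ s / m := (Nat.le_div_iff_mul_le hm).mpr hs
      omega
    have hsplit : s = s % m + (s / m) * m := by
      rw [Nat.mul_comm]; exact (Nat.mod_add_div s m).symm
    have hdecomp : prodCLM F k s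
        = (prodCLM F (k + s % m) ((s / m) * m)).comp (prodCLM F k (s % m)) := by
      conv_lhs => rw [hsplit]
      exact prodCLM_add' F k (s % m) _
    have hpow : c ^ (s / m) ≤ c ^ q₀ := pow_le_pow_of_le_one hc0 hc1.le hq
    have hΨm0 : 0 < Ψmax := by linarith
    calc ‖prodCLM F k s‖
        ≤ ‖prodCLM F (k + s % m) ((s / m) * m)‖ * ‖prodCLM F k (s % m)‖ := by
          rw [hdecomp]; exact ContinuousLinearMap.opNorm_comp_le _ _
      _ ≤ (c ^ (s / m) * D) * Ψmax := by
          apply mul_le_mul (keyc _ _) (hΨbound _ _ (Nat.mod_lt s (by omega)).le)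
            (norm_nonneg _) (by positivity)
      _ ≤ (c ^ q₀ * D) * Ψmax := by
          have := mul_le_mul_of_nonneg_right (mul_le_mul_of_nonneg_right hpow hD0.le) hΨm0.le
          linarith
      _ ≤ 1 / 2 := by
          have := (lt_div_iff₀ (by positivity : (0:ℝ) < D * Ψmax)).mp hq₀
          nlinarith
end

section
/- Let X be a real sub-exponential random variable with E[X] = 0 and ‖X‖_{ψ₁} > 0 finite. Then for every 𝔞 > 1 and every real λ with |λ| ≤ (𝔞−1)/(𝔞·‖X‖_{ψ₁}), the moment generating function satisfies E[exp(λX)] ≤ exp(2·𝔞·‖X‖_{ψ₁}²·λ²). -/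
open MeasureTheory ProbabilityTheory
open scoped ENNReal NNReal BigOperators RealInnerProductSpace

lemma exp_taylor_tail (x : ℝ) :
    Real.exp x - 1 - x = ∑' n : ℕ, x ^ (n + 2) / ((Nat.factorial (n + 2)) : ℝ) := by
  have hs : Summable (fun n : ℕ => x ^ n / ((Nat.factorial n) : ℝ)) :=
    Real.summable_pow_div_factorial x
  have h0 : Real.exp x = ∑' n : ℕ, x ^ n / ((Nat.factorial n) : ℝ) := by
    rw [Real.exp_eq_exp_ℝ, NormedSpace.exp_eq_tsum_div]
  have hs1 : Summable (fun n : ℕ => x ^ (n + 1) / ((Nat.factorial (n + 1)) : ℝ)) :=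
    (summable_nat_add_iff 1).2 hs
  have h1 : (∑' n : ℕ, x ^ n / ((Nat.factorial n) : ℝ))
      = x ^ 0 / ((Nat.factorial 0) : ℝ)
        + ∑' n : ℕ, x ^ (n + 1) / ((Nat.factorial (n + 1)) : ℝ) := Summable.tsum_eq_zero_add hs
  have h2 : (∑' n : ℕ, x ^ (n + 1) / ((Nat.factorial (n + 1)) : ℝ))
      = x ^ 1 / ((Nat.factorial 1) : ℝ)
        + ∑' n : ℕ, x ^ (n + 2) / ((Nat.factorial (n + 2)) : ℝ) := Summable.tsum_eq_zero_add hs1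
  rw [h0, h1, h2]
  norm_num

lemma key_ineq {u c : ℝ} (hu : 0 ≤ u) (hc0 : 0 ≤ c) (hc1 : c ≤ 1) :
    Real.exp (c * u) - 1 - c * u ≤ c ^ 2 * (Real.exp u - 1 - u) := by
  rw [exp_taylor_tail, exp_taylor_tail, ← tsum_mul_left]
  have hs1 : Summable (fun n : ℕ => (c * u) ^ (n + 2) / ((Nat.factorial (n + 2)) : ℝ)) :=
    (summable_nat_add_iff 2).2 (Real.summable_pow_div_factorial (c * u))
  have hs2 : Summable (fun n : ℕ => c ^ 2 * (u ^ (n + 2) / ((Nat.factorial (n + 2)) : ℝ))) :=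
    ((summable_nat_add_iff 2).2 (Real.summable_pow_div_factorial u)).mul_left _
  refine Summable.tsum_le_tsum (fun n => ?_) hs1 hs2
  have h1 : (c * u) ^ (n + 2) / ((Nat.factorial (n + 2)) : ℝ)
      = c ^ (n + 2) * (u ^ (n + 2) / ((Nat.factorial (n + 2)) : ℝ)) := by
    rw [mul_pow]; ring
  rw [h1]
  exact mul_le_mul_of_nonneg_right (pow_le_pow_of_le_one hc0 hc1 (by omega)) (by positivity)

lemma exp_sub_le_exp_abs_sub (y : ℝ) : Real.exp y - y ≤ Real.exp |y| - |y| := by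
  rcases le_or_gt 0 y with h | h
  · rw [abs_of_nonneg h]
  · rw [abs_of_neg h]
    have hsinh : -y ≤ Real.sinh (-y) := by
      rcases lt_or_eq_of_le h.le with h' | h'
      · exact (Real.self_lt_sinh_iff.2 (by linarith)).le
      · simp [← h']
    rw [Real.sinh_eq, neg_neg] at hsinh
    have := Real.exp_pos y
    nlinarith [Real.exp_pos (-y)]

/-- MGF bound for centered sub-exponential random variables:
for `𝔞 > 1` and `|λ| ≤ (𝔞−1)/(𝔞‖X‖_{ψ₁})`, `E[exp(λX)] ≤ exp(2𝔞‖X‖_{ψ₁}²λ²)`. -/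
theorem subexponential_mgf {Ω : Type*} [MeasurableSpace Ω]
    (P : Measure Ω) [IsProbabilityMeasure P]
    (X : Ω → ℝ) (hX : Measurable X) (hint : Integrable X P)
    (hmean : ∫ ω, X ω ∂P = 0)
    (hfin : psiNorm 1 P X ≠ ⊤) (hpos : 0 < psiNorm 1 P X) :
    ∀ a : ℝ, 1 < a → ∀ lam : ℝ, |lam| ≤ (a - 1) / (a * (psiNorm 1 P X).toReal) →
      ∫⁻ ω, ENNReal.ofReal (Real.exp (lam * X ω)) ∂P ≤
        ENNReal.ofReal (Real.exp (2 * a * ((psiNorm 1 P X).toReal) ^ 2 * lam ^ 2)) := by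
  intro a ha lam hlam
  set K : ℝ := (psiNorm 1 P X).toReal with hKdef
  have hKpos : 0 < K := ENNReal.toReal_pos hpos.ne' hfin
  -- Step A: for every t > K, the Orlicz integral at scale t is ≤ 2
  have stepA : ∀ t : ℝ, K < t → ∫⁻ ω, ENNReal.ofReal (Real.exp (|X ω| / t)) ∂P ≤ 2 := by
    intro t ht
    have h1 : psiNorm 1 P X < ENNReal.ofReal t := by
      rw [← ENNReal.ofReal_toReal hfin]
      exact (ENNReal.ofReal_lt_ofReal_iff (hKpos.trans ht)).2 ht
    rw [psiNorm, sInf_lt_iff] at h1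
    obtain ⟨s, ⟨t', ht'pos, rfl, hint2⟩, hst⟩ := h1
    have ht't : t' < t := by
      by_contra hcon
      exact absurd hst (not_lt.2 (ENNReal.ofReal_le_ofReal (not_lt.1 hcon)))
    refine le_trans (lintegral_mono fun ω => ?_) hint2
    apply ENNReal.ofReal_le_ofReal
    apply Real.exp_le_exp.2
    rw [Real.rpow_one]
    exact div_le_div_of_nonneg_left (abs_nonneg _) ht'pos ht't.le
  -- the scale t
  set m : ℝ := min (Real.sqrt (2 * a)) (a / (a - 1)) with hmdef
  have hm1 : 1 < m := by
    apply lt_min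
    · rw [show (1:ℝ) = Real.sqrt 1 by simp]
      exact Real.sqrt_lt_sqrt (by norm_num) (by linarith)
    · rw [one_lt_div (by linarith)]; linarith
  set t : ℝ := K * m with htdef
  have htK : K < t := by nlinarith
  have htpos : 0 < t := hKpos.trans htK
  set c : ℝ := |lam| * t with hcdef
  have hc0 : 0 ≤ c := mul_nonneg (abs_nonneg _) htpos.le
  have hc1 : c ≤ 1 := by
    have h2 : t ≤ K * (a / (a - 1)) := mul_le_mul_of_nonneg_left (min_le_right _ _) hKpos.le
    have h3 : c ≤ (a - 1) / (a * K) * (K * (a / (a - 1))) :=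
      mul_le_mul hlam h2 htpos.le (div_nonneg (by linarith) (by positivity))
    have h4 : (a - 1) / (a * K) * (K * (a / (a - 1))) = 1 := by
      have ha0 : a ≠ 0 := by linarith
      have hK0 : K ≠ 0 := hKpos.ne'
      have ha1 : a - 1 ≠ 0 := by linarith
      field_simp
    linarith
  have ht2 : t ^ 2 ≤ 2 * a * K ^ 2 := by
    have hm2 : m ^ 2 ≤ 2 * a := by
      have := Real.sq_sqrt (by linarith : (0:ℝ) ≤ 2 * a)
      nlinarith [min_le_left (Real.sqrt (2 * a)) (a / (a - 1)), Real.sqrt_nonneg (2 * a)]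
    nlinarith [sq_nonneg K]
  -- f and its properties
  set f : Ω → ℝ := fun ω => Real.exp (|X ω| / t) with hfdef
  have hf2 : ∫⁻ ω, ENNReal.ofReal (f ω) ∂P ≤ 2 := stepA t htK
  have hfmeas : Measurable f := (Real.measurable_exp.comp ((hX.abs).div_const t))
  have hfint : Integrable f P := by
    refine ⟨hfmeas.aestronglyMeasurable, ?_⟩
    rw [hasFiniteIntegral_iff_ofReal (ae_of_all _ fun ω => (Real.exp_pos _).le)]
    exact lt_of_le_of_lt hf2 (by norm_num)
  -- pointwise: exp(λ X) ≤ f, and the refined bound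
  have hpt : ∀ ω, Real.exp (lam * X ω) ≤ 1 + lam * X ω + c ^ 2 * (f ω - 1) := by
    intro ω
    set u : ℝ := |X ω| / t with hudef
    have hu0 : 0 ≤ u := div_nonneg (abs_nonneg _) htpos.le
    have habs : |lam * X ω| = c * u := by
      rw [abs_mul, hcdef, hudef]
      field_simp
    have h1 := exp_sub_le_exp_abs_sub (lam * X ω)
    rw [habs] at h1
    have h2 := key_ineq hu0 hc0 hc1
    have h3 : c ^ 2 * (Real.exp u - 1 - u) ≤ c ^ 2 * (Real.exp u - 1) := by
      nlinarith [sq_nonneg c]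
    have hfu : f ω = Real.exp u := rfl
    rw [hfu]
    linarith
  have hptle : ∀ ω, Real.exp (lam * X ω) ≤ f ω := by
    intro ω
    apply Real.exp_le_exp.2
    calc lam * X ω ≤ |lam * X ω| := le_abs_self _
      _ = c * (|X ω| / t) := by rw [abs_mul, hcdef]; field_simp
      _ ≤ 1 * (|X ω| / t) :=
          mul_le_mul_of_nonneg_right hc1 (div_nonneg (abs_nonneg _) htpos.le)
      _ = |X ω| / t := one_mul _
  have hgmeas : Measurable fun ω => Real.exp (lam * X ω) :=
    Real.measurable_exp.comp (hX.const_mul lam)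
  have hgint : Integrable (fun ω => Real.exp (lam * X ω)) P := by
    refine Integrable.mono hfint hgmeas.aestronglyMeasurable (ae_of_all _ fun ω => ?_)
    rw [Real.norm_eq_abs, Real.norm_eq_abs, abs_of_pos (Real.exp_pos _),
      abs_of_pos (Real.exp_pos _)]
    exact hptle ω
  -- RHS integrable
  have hi1 : Integrable (fun ω => lam * X ω) P := hint.const_mul lam
  have hi2 : Integrable (fun ω => 1 + lam * X ω) P := (integrable_const 1).add hi1
  have hi3 : Integrable (fun ω => f ω - 1) P := hfint.sub (integrable_const 1)
  have hi4 : Integrable (fun ω => c ^ 2 * (f ω - 1)) P := hi3.const_mul _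
  have hrhs : Integrable (fun ω => 1 + lam * X ω + c ^ 2 * (f ω - 1)) P := hi2.add hi4
  have hintle : ∫ ω, Real.exp (lam * X ω) ∂P ≤ 1 + c ^ 2 * ((∫ ω, f ω ∂P) - 1) := by
    have h1 : ∫ ω, Real.exp (lam * X ω) ∂P ≤ ∫ ω, (1 + lam * X ω + c ^ 2 * (f ω - 1)) ∂P :=
      integral_mono hgint hrhs fun ω => hpt ω
    have h2 : ∫ ω, (1 + lam * X ω + c ^ 2 * (f ω - 1)) ∂P
        = 1 + c ^ 2 * ((∫ ω, f ω ∂P) - 1) := by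
      rw [integral_add hi2 hi4, integral_add (integrable_const 1) hi1,
        integral_const_mul, integral_const_mul,
        integral_sub hfint (integrable_const 1), hmean, integral_const]
      simp
    linarith [h1, h2.le, h2.ge]
  have hfint2 : ∫ ω, f ω ∂P ≤ 2 := by
    have := integral_eq_lintegral_of_nonneg_ae
      (ae_of_all P fun ω => (Real.exp_pos (|X ω| / t)).le) hfmeas.aestronglyMeasurable
    rw [this]
    calc (∫⁻ ω, ENNReal.ofReal (f ω) ∂P).toReal ≤ (2 : ℝ≥0∞).toReal :=
          ENNReal.toReal_mono (by norm_num) hf2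
      _ = 2 := by norm_num
  have hfinal : ∫ ω, Real.exp (lam * X ω) ∂P
      ≤ Real.exp (2 * a * K ^ 2 * lam ^ 2) := by
    have hcsq : c ^ 2 ≤ 2 * a * K ^ 2 * lam ^ 2 := by
      have : c ^ 2 = lam ^ 2 * t ^ 2 := by rw [hcdef, mul_pow, sq_abs]
      nlinarith [sq_nonneg lam]
    have h5 : 1 + c ^ 2 * ((∫ ω, f ω ∂P) - 1) ≤ 1 + c ^ 2 := by
      nlinarith [sq_nonneg c]
    have h6 : (1 : ℝ) + 2 * a * K ^ 2 * lam ^ 2 ≤ Real.exp (2 * a * K ^ 2 * lam ^ 2) := by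
      have := Real.add_one_le_exp (2 * a * K ^ 2 * lam ^ 2)
      linarith
    linarith
  rw [← ofReal_integral_eq_lintegral_ofReal hgint (ae_of_all _ fun ω => (Real.exp_pos _).le)]
  exact ENNReal.ofReal_le_ofReal hfinal
end

section
/- (Bernstein inequality with explicit constant.) Let X₁,…,X_N be real, mean-zero, independent random variables with finite ψ₁-Orlicz norms, and set R := max_{i∈[1:N]} ‖X_i‖_{ψ₁} > 0. Then for every t ≥ 0, ℙ(|(1/N)Σ_{i=1}^N X_i| ≥ t) ≤ 2·exp(−(1/10)·min{t²/R², t/R}·N). -/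
open MeasureTheory ProbabilityTheory
open scoped ENNReal NNReal BigOperators RealInnerProductSpace

/-! For `|l| * K ≤ 1` the pointwise bound
`exp (l * x) ≤ 1 + l * x + (l * K) ^ 2 * (exp (|x| / K) - 1)` integrates, against a centred `X`
with `E exp (|X| / K) ≤ 2` (which holds at `K = ‖X‖_{ψ₁}`), to `E exp (l * X) ≤ exp (l ^ 2 * K ^ 2)`.
Independence multiplies these bounds, and the Chernoff bound with `l = min (t / (2 * K ^ 2)) (1 / K)`
gives each tail of `∑ X i ≥ N * t` the bound `exp (-min (t ^ 2 / K ^ 2) (t / K) * N / 4)`. -/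

open Real Filter Topology

lemma Real.exp_sub_one_sub_le_exp_abs_sub_one_sub_abs (z : ℝ) :
    exp z - 1 - z ≤ exp |z| - 1 - |z| := by
  rcases le_or_gt 0 z with hz | hz
  · rw [abs_of_nonneg hz]
  · have := Real.sinh_lt_self_iff.mpr hz
    rw [Real.sinh_eq] at this
    rw [abs_of_neg hz]
    linarith

lemma Real.exp_mul_sub_one_sub_mul_le {u y : ℝ} (hu0 : 0 ≤ u) (hu1 : u ≤ 1) (hy : 0 ≤ y) :
    exp (u * y) - 1 - u * y ≤ u ^ 2 * (exp y - 1 - y) := by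
  set g : ℝ → ℝ := fun x ↦ u ^ 2 * (exp x - 1 - x) - (exp (u * x) - 1 - u * x)
  have hg : ∀ x, HasDerivAt g (u * (u * (exp x - 1) - (exp (u * x) - 1))) x := fun x ↦ by
    have := (((hasDerivAt_exp x).sub_const 1).sub (hasDerivAt_id x)).const_mul (u ^ 2) |>.sub
      ((((hasDerivAt_id x).const_mul u).exp.sub_const 1).sub ((hasDerivAt_id x).const_mul u))
    exact this.congr_deriv (by simp only [id]; ring)
  have hconv : ∀ x, exp (u * x) - 1 ≤ u * (exp x - 1) := fun x ↦ by
    have := convexOn_exp.2 (Set.mem_univ x) (Set.mem_univ 0) hu0 (sub_nonneg.2 hu1) (by ring)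
    simp only [smul_eq_mul, mul_zero, add_zero, exp_zero, mul_one] at this
    linarith
  have hmono : MonotoneOn g (Set.Ici 0) :=
    monotoneOn_of_hasDerivWithinAt_nonneg (convex_Ici 0)
      (fun x _ ↦ (hg x).continuousAt.continuousWithinAt) (fun x _ ↦ (hg x).hasDerivWithinAt)
      (fun x _ ↦ mul_nonneg hu0 (sub_nonneg.2 (hconv x)))
  have := hmono Set.self_mem_Ici hy hy
  simp only [g, mul_zero, exp_zero] at this
  linarith

lemma Real.exp_mul_le_of_abs_mul_le_one {l K : ℝ} (x : ℝ) (hK : 0 < K) (hlK : |l| * K ≤ 1) :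
    exp (l * x) ≤ 1 + l * x + (l * K) ^ 2 * (exp (|x| / K) - 1) := by
  have hy : 0 ≤ |x| / K := div_nonneg (abs_nonneg x) hK.le
  have habs : |l * x| = (|l| * K) * (|x| / K) := by
    rw [abs_mul]; field_simp
  have hquad : exp (l * x) - 1 - l * x ≤ (l * K) ^ 2 * (exp (|x| / K) - 1 - |x| / K) :=
    calc exp (l * x) - 1 - l * x ≤ exp |l * x| - 1 - |l * x| :=
          exp_sub_one_sub_le_exp_abs_sub_one_sub_abs _
      _ ≤ (|l| * K) ^ 2 * (exp (|x| / K) - 1 - |x| / K) := by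
          rw [habs]; exact exp_mul_sub_one_sub_mul_le (by positivity) hlK hy
      _ = (l * K) ^ 2 * (exp (|x| / K) - 1 - |x| / K) := by rw [mul_pow, sq_abs, ← mul_pow]
  nlinarith [mul_nonneg (sq_nonneg (l * K)) hy]

lemma exists_mul_le_one_and_min_div_four_le {t K : ℝ} (ht : 0 ≤ t) (hK : 0 < K) :
    ∃ l, 0 ≤ l ∧ l * K ≤ 1 ∧
      min (t ^ 2 / K ^ 2) (t / K) / 4 ≤ l * t - l ^ 2 * K ^ 2 := by
  rcases le_or_gt t (2 * K) with htK | htK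
  · refine ⟨t / (2 * K ^ 2), by positivity, ?_, ?_⟩
    · rw [div_mul_eq_mul_div, div_le_one (by positivity)]; nlinarith
    · have : t / (2 * K ^ 2) * t - (t / (2 * K ^ 2)) ^ 2 * K ^ 2 = t ^ 2 / K ^ 2 / 4 := by
        field_simp; ring
      rw [this]; gcongr; exact min_le_left _ _
  · refine ⟨1 / K, by positivity, by field_simp; rfl, ?_⟩
    have h2 : 2 < t / K := by rwa [lt_div_iff₀ hK]
    have : 1 / K * t - (1 / K) ^ 2 * K ^ 2 = t / K - 1 := by field_simp
    rw [this]
    linarith [min_le_right (t ^ 2 / K ^ 2) (t / K)]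

section
variable {Ω : Type*} [MeasurableSpace Ω] {P : Measure Ω}

-- The infimum defining `psiNorm` is attained: apply Fatou's lemma along `K + 1 / (n + 1) ↓ K`.
lemma lintegral_exp_le_two_of_psiNorm_le {p K : ℝ} {X : Ω → ℝ} (hp : 0 ≤ p) (hK : 0 < K)
    (hX : AEMeasurable X P) (h : psiNorm p P X ≤ ENNReal.ofReal K) :
    ∫⁻ ω, ENNReal.ofReal (exp ((|X ω| / K) ^ p)) ∂P ≤ 2 := by
  set F : ℝ → Ω → ℝ≥0∞ := fun s ω ↦ ENNReal.ofReal (exp ((|X ω| / s) ^ p))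
  set t : ℕ → ℝ := fun n ↦ K + 1 / (n + 1)
  have ht_pos : ∀ n, 0 < t n := fun n ↦ by positivity
  have hbound : ∀ n, ∫⁻ ω, F (t n) ω ∂P ≤ 2 := fun n ↦ by
    have hlt : psiNorm p P X < ENNReal.ofReal (t n) :=
      h.trans_lt ((ENNReal.ofReal_lt_ofReal_iff (ht_pos n)).2
        (by simp only [t]; linarith [Nat.one_div_pos_of_nat (α := ℝ) (n := n)]))
    obtain ⟨_, ⟨s, hs, rfl, hs2⟩, hst⟩ := sInf_lt_iff.1 hlt
    have hst : s ≤ t n := ((ENNReal.ofReal_lt_ofReal_iff (ht_pos n)).1 hst).le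
    refine le_trans (lintegral_mono fun ω ↦ ?_) hs2
    simp only [F]
    gcongr
  have hlim : ∀ ω, Tendsto (fun n ↦ F (t n) ω) atTop (𝓝 (F K ω)) := fun ω ↦ by
    have ht : Tendsto t atTop (𝓝 K) := by
      simpa [t] using tendsto_one_div_add_atTop_nhds_zero_nat.const_add K
    have hcont : ContinuousAt (fun s ↦ F s ω) K := by
      refine ENNReal.continuous_ofReal.continuousAt.comp ?_
      fun_prop (disch := first | exact hK.ne' | exact Or.inr hp)
    exact hcont.tendsto.comp ht
  calc ∫⁻ ω, F K ω ∂P = ∫⁻ ω, liminf (fun n ↦ F (t n) ω) atTop ∂P :=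
        lintegral_congr fun ω ↦ (hlim ω).liminf_eq.symm
    _ ≤ liminf (fun n ↦ ∫⁻ ω, F (t n) ω ∂P) atTop :=
        lintegral_liminf_le' fun n ↦ by simp only [F]; fun_prop
    _ ≤ 2 := liminf_le_of_frequently_le' (Frequently.of_forall hbound)

lemma integrable_exp_abs_div_of_psiNorm_le {K : ℝ} {X : Ω → ℝ} (hK : 0 < K)
    (hX : AEMeasurable X P) (h : psiNorm 1 P X ≤ ENNReal.ofReal K) :
    Integrable (fun ω ↦ exp (|X ω| / K)) P := by
  refine (lintegral_ofReal_ne_top_iff_integrable (by fun_prop)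
    (ae_of_all _ fun ω ↦ (exp_pos _).le)).1
    (ne_top_of_le_ne_top (ENNReal.ofNat_ne_top (n := 2)) ?_)
  simpa using lintegral_exp_le_two_of_psiNorm_le zero_le_one hK hX h

lemma integral_exp_abs_div_le_two_of_psiNorm_le {K : ℝ} {X : Ω → ℝ} (hK : 0 < K)
    (hX : AEMeasurable X P) (h : psiNorm 1 P X ≤ ENNReal.ofReal K) :
    ∫ ω, exp (|X ω| / K) ∂P ≤ 2 := by
  rw [← ENNReal.ofReal_le_ofReal_iff zero_le_two, ofReal_integral_eq_lintegral_ofReal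
    (integrable_exp_abs_div_of_psiNorm_le hK hX h) (ae_of_all _ fun ω ↦ (exp_pos _).le)]
  simpa using lintegral_exp_le_two_of_psiNorm_le zero_le_one hK hX h

lemma integrable_exp_mul_of_psiNorm_le {K l : ℝ} {X : Ω → ℝ} (hK : 0 < K)
    (hlK : |l| * K ≤ 1)    (hX : AEMeasurable X P) (h : psiNorm 1 P X ≤ ENNReal.ofReal K) :
    Integrable (fun ω ↦ exp (l * X ω)) P := by
  refine (integrable_exp_abs_div_of_psiNorm_le hK hX h).mono' (by fun_prop)
    (ae_of_all _ fun ω ↦ ?_)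
  rw [Real.norm_eq_abs, abs_of_pos (exp_pos _), exp_le_exp]
  calc l * X ω ≤ |l| * |X ω| := (le_abs_self _).trans (abs_mul l (X ω)).le
    _ = (|l| * K) * (|X ω| / K) := by field_simp
    _ ≤ |X ω| / K := mul_le_of_le_one_left (by positivity) hlK

lemma mgf_le_exp_of_psiNorm_le [IsProbabilityMeasure P] {K l : ℝ} {X : Ω → ℝ}
    (hint : Integrable X P) (hmean : P[X] = 0) (hK : 0 < K) (hlK : |l| * K ≤ 1)
    (h : psiNorm 1 P X ≤ ENNReal.ofReal K) :
    mgf X P l ≤ exp (l ^ 2 * K ^ 2) := by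
  have hX := hint.aemeasurable
  have hexp := integrable_exp_abs_div_of_psiNorm_le hK hX h
  have hexp_le := integral_exp_abs_div_le_two_of_psiNorm_le hK hX h
  have h_lin : Integrable (fun ω ↦ 1 + l * X ω) P := (integrable_const 1).add (hint.const_mul l)
  have h_exp : Integrable (fun ω ↦ (l * K) ^ 2 * (exp (|X ω| / K) - 1)) P :=
    (hexp.sub (integrable_const 1)).const_mul _
  calc mgf X P l ≤ ∫ ω, (1 + l * X ω + (l * K) ^ 2 * (exp (|X ω| / K) - 1)) ∂P :=
        integral_mono (integrable_exp_mul_of_psiNorm_le hK hlK hX h) (h_lin.add h_exp)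
          fun ω ↦ exp_mul_le_of_abs_mul_le_one (X ω) hK hlK
    _ = 1 + (l * K) ^ 2 * (∫ ω, exp (|X ω| / K) ∂P - 1) := by
        rw [integral_add h_lin h_exp, integral_add (integrable_const 1) (hint.const_mul l),
          integral_const_mul, integral_const_mul, integral_sub hexp (integrable_const 1), hmean]
        simp
    _ ≤ 1 + l ^ 2 * K ^ 2 := by nlinarith [sq_nonneg (l * K)]
    _ ≤ exp (l ^ 2 * K ^ 2) := by linarith [add_one_le_exp (l ^ 2 * K ^ 2)]

lemma measureReal_sum_ge_le_of_mgf_le {ι : Type*} [Fintype ι] [IsFiniteMeasure P]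
    {Y : ι → Ω → ℝ} (hindep : iIndepFun Y P) (hmeas : ∀ i, Measurable (Y i)) {l c : ℝ}
    (hl : 0 ≤ l) (hint : ∀ i, Integrable (fun ω ↦ exp (l * Y i ω)) P)
    (hmgf : ∀ i, mgf (Y i) P l ≤ exp c) (ε : ℝ) :
    P.real {ω | ε ≤ ∑ i, Y i ω} ≤ exp (-l * ε + Fintype.card ι * c) := by
  have hset : {ω | ε ≤ ∑ i, Y i ω} = {ω | ε ≤ (∑ i, Y i) ω} := by
    simp [Finset.sum_apply]
  calc P.real {ω | ε ≤ ∑ i, Y i ω}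
      ≤ exp (-l * ε) * mgf (∑ i, Y i) P l := hset ▸
        measure_ge_le_exp_mul_mgf ε hl (hindep.integrable_exp_mul_sum hmeas fun i _ ↦ hint i)
    _ = exp (-l * ε) * ∏ i, mgf (Y i) P l := by rw [hindep.mgf_sum hmeas]
    _ ≤ exp (-l * ε) * ∏ _i : ι, exp c := by
        gcongr with i
        exacts [fun i _ ↦ mgf_nonneg, hmgf i]
    _ = exp (-l * ε + Fintype.card ι * c) := by
        rw [Finset.prod_const, ← exp_nat_mul, ← exp_add, Finset.card_univ]

lemma measureReal_sum_ge_le_of_psiNorm_le {ι : Type*} [Fintype ι] [IsProbabilityMeasure P]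
    {Y : ι → Ω → ℝ} (hindep : iIndepFun Y P) (hmeas : ∀ i, Measurable (Y i))
    (hint : ∀ i, Integrable (Y i) P) (hmean : ∀ i, P[Y i] = 0) {K : ℝ} (hK : 0 < K)
    (hψ : ∀ i, psiNorm 1 P (Y i) ≤ ENNReal.ofReal K) {t : ℝ} (ht : 0 ≤ t) :
    P.real {ω | Fintype.card ι * t ≤ ∑ i, Y i ω} ≤
      exp (-(1 / 4) * min (t ^ 2 / K ^ 2) (t / K) * Fintype.card ι) := by
  obtain ⟨l, hl, hlK, hgain⟩ := exists_mul_le_one_and_min_div_four_le ht hK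
  have hlK' : |l| * K ≤ 1 := by rwa [abs_of_nonneg hl]
  refine (measureReal_sum_ge_le_of_mgf_le hindep hmeas hl
    (fun i ↦ integrable_exp_mul_of_psiNorm_le hK hlK' (hmeas i).aemeasurable (hψ i))
    (fun i ↦ mgf_le_exp_of_psiNorm_le (hint i) (hmean i) hK hlK' (hψ i)) _).trans ?_
  gcongr
  nlinarith [(Nat.cast_nonneg (Fintype.card ι) : (0 : ℝ) ≤ _)]

lemma measureReal_abs_sum_ge_le_of_psiNorm_le {ι : Type*} [Fintype ι] [IsProbabilityMeasure P]
    {Y : ι → Ω → ℝ} (hindep : iIndepFun Y P) (hmeas : ∀ i, Measurable (Y i))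
    (hint : ∀ i, Integrable (Y i) P) (hmean : ∀ i, P[Y i] = 0) {K : ℝ} (hK : 0 < K)
    (hψ : ∀ i, psiNorm 1 P (Y i) ≤ ENNReal.ofReal K) {t : ℝ} (ht : 0 ≤ t) :
    P.real {ω | Fintype.card ι * t ≤ |∑ i, Y i ω|} ≤
      2 * exp (-(1 / 4) * min (t ^ 2 / K ^ 2) (t / K) * Fintype.card ι) := by
  have hsplit : {ω | Fintype.card ι * t ≤ |∑ i, Y i ω|} ⊆
      {ω | Fintype.card ι * t ≤ ∑ i, Y i ω} ∪
        {ω | Fintype.card ι * t ≤ ∑ i, (-Y i) ω} := by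
    intro ω (hω : (_ : ℝ) ≤ _)
    rcases le_abs'.1 hω with h | h
    · right; simpa [Finset.sum_neg_distrib] using le_neg_of_le_neg h
    · left; exact h
  have hneg := measureReal_sum_ge_le_of_psiNorm_le (Y := fun i ↦ -Y i)
    (hindep.comp (fun _ ↦ Neg.neg) fun _ ↦ measurable_neg) (fun i ↦ (hmeas i).neg)
    (fun i ↦ (hint i).neg) (fun i ↦ by simp [integral_neg, hmean i]) hK
    (fun i ↦ by simpa [psiNorm] using hψ i) ht
  calc _ ≤ _ := measureReal_mono hsplit
    _ ≤ _ := measureReal_union_le _ _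
    _ ≤ _ := add_le_add
        (measureReal_sum_ge_le_of_psiNorm_le hindep hmeas hint hmean hK hψ ht) hneg
    _ = _ := by ring

end

theorem bernstein_inequality_general {Ω : Type*} [MeasurableSpace Ω]
    (P : Measure Ω) [IsProbabilityMeasure P] (N : ℕ)
    (X : Fin N → Ω → ℝ) (hmeas : ∀ i, Measurable (X i))
    (hint : ∀ i, Integrable (X i) P) (hmean : ∀ i, ∫ ω, X i ω ∂P = 0)
    (hindep : iIndepFun X P)
    (hfin : ∀ i, psiNorm 1 P (X i) ≠ ⊤)
    (R : ℝ) (hR : R = ⨆ i, (psiNorm 1 P (X i)).toReal) (hRpos : 0 < R) :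
    ∀ t : ℝ, 0 ≤ t →
      P {ω | t ≤ |(1 / N : ℝ) * ∑ i, X i ω|} ≤
        ENNReal.ofReal (2 * Real.exp (-(1 / 10) * min (t ^ 2 / R ^ 2) (t / R) * N)) := by
  intro t ht
  have hψ : ∀ i, psiNorm 1 P (X i) ≤ ENNReal.ofReal R := fun i ↦
    (ENNReal.le_ofReal_iff_toReal_le (hfin i) hRpos.le).2
      (hR ▸ le_ciSup (f := fun i ↦ (psiNorm 1 P (X i)).toReal) (Set.finite_range _).bddAbove i)
  have hsub :
      {ω | t ≤ |(1 / N : ℝ) * ∑ i, X i ω|} ⊆ {ω | N * t ≤ |∑ i, X i ω|} := by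
    intro ω (hω : (_ : ℝ) ≤ _)
    rcases N.eq_zero_or_pos with rfl | hN
    · simp
    · simpa [abs_mul, abs_of_pos, hN, le_inv_mul_iff₀] using hω
  rw [ENNReal.le_ofReal_iff_toReal_le (measure_ne_top P _) (by positivity), ← measureReal_def]
  calc P.real _ ≤ P.real {ω | N * t ≤ |∑ i, X i ω|} := measureReal_mono hsub
    _ ≤ 2 * exp (-(1 / 4) * min (t ^ 2 / R ^ 2) (t / R) * N) := by
        simpa using measureReal_abs_sum_ge_le_of_psiNorm_le hindep hmeas hint hmean hRpos hψ ht
    _ ≤ 2 * exp (-(1 / 10) * min (t ^ 2 / R ^ 2) (t / R) * N) := by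
        have : 0 ≤ min (t ^ 2 / R ^ 2) (t / R) := le_min (by positivity) (by positivity)
        gcongr
        nlinarith [(Nat.cast_nonneg N : (0 : ℝ) ≤ N)]

/-- Bernstein inequality with explicit constant `c' = 1/10`. -/
theorem bernstein_inequality {Ω : Type*} [MeasurableSpace Ω]
    (P : Measure Ω) [IsProbabilityMeasure P] (N : ℕ) (hN : 1 ≤ N)
    (X : Fin N → Ω → ℝ) (hmeas : ∀ i, Measurable (X i))
    (hint : ∀ i, Integrable (X i) P) (hmean : ∀ i, ∫ ω, X i ω ∂P = 0)
    (hindep : iIndepFun X P)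
    (hfin : ∀ i, psiNorm 1 P (X i) ≠ ⊤)
    (R : ℝ) (hR : R = ⨆ i, (psiNorm 1 P (X i)).toReal) (hRpos : 0 < R) :
    ∀ t : ℝ, 0 ≤ t →
      P {ω | t ≤ |(1 / N : ℝ) * ∑ i, X i ω|} ≤
        ENNReal.ofReal (2 * Real.exp (-(1 / 10) * min (t ^ 2 / R ^ 2) (t / R) * N)) :=
  bernstein_inequality_general P N X hmeas hint hmean hindep hfin R hR hRpos
end
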